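/- arXiv:1803.08108 — 3 statements merged into one kernel-verified Lean document; each statement's English description precedes it below -/
import Mathlib

section
/- Let V be a finite-dimensional real inner product space and let 𝓕 be a multi-flag of V. Then Σ_{W ∈ 𝓕} dim W_𝓕 ≥ dim V, and equality holds if and only if 𝓕 is in general position (i.e., V is the internal direct sum of the family {W_𝓕 | W ∈ 𝓕}). -/
/-!
STATEMENT 0: For a multi-flag 𝓕 of a finite-dimensional real inner product space V,
Σ_{W ∈ 𝓕} dim W_𝓕 ≥ dim V, with equality iff 𝓕 is in general position.
-/

variable {V : Type*} [NormedAddCommGroup V] [InnerProductSpace ℝ V] [FiniteDimensional ℝ V]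

/-- A multi-flag of `V`: a finite set of subspaces containing `⊥` and `⊤`,
closed under pairwise intersection. -/
def IsMultiFlag (F : Finset (Submodule ℝ V)) : Prop :=
  ⊥ ∈ F ∧ ⊤ ∈ F ∧ ∀ A ∈ F, ∀ B ∈ F, A ⊓ B ∈ F

/-- The associated graded piece `W_𝓕 = W ⊓ (Σ_{U ∈ 𝓕, U ⊊ W} U)ᗮ`. -/
noncomputable def gradedPiece (F : Finset (Submodule ℝ V)) (W : Submodule ℝ V) :
    Submodule ℝ V :=
  letI := Classical.decEq (Submodule ℝ V)
  letI : DecidablePred fun U : Submodule ℝ V => U < W := fun _ => Classical.propDecidable _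
  W ⊓ ((F.filter fun U => U < W).sup id)ᗮ

/-- `𝓕` is in general position when `V` is the internal direct sum of the pieces `W_𝓕`. -/
def InGeneralPosition (F : Finset (Submodule ℝ V)) : Prop :=
  letI := Classical.decEq {W // W ∈ F}
  DirectSum.IsInternal fun W : {W // W ∈ F} => gradedPiece F W.1

open Module

lemma gradedPiece_sup_eq (F : Finset (Submodule ℝ V)) (W : Submodule ℝ V) :
    letI := Classical.decEq (Submodule ℝ V)
    letI : DecidablePred fun U : Submodule ℝ V => U < W := fun _ => Classical.propDecidable _
    ((F.filter fun U => U < W).sup id) ⊔ gradedPiece F W = W := by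
  classical
  letI : DecidablePred fun U : Submodule ℝ V => U < W := fun _ => Classical.propDecidable _
  set S : Submodule ℝ V := (F.filter fun U => U < W).sup id with hS
  have hSW : S ≤ W := by
    refine Finset.sup_le fun U hU => ?_
    simp only [Finset.mem_filter] at hU
    exact le_of_lt hU.2
  have := Submodule.sup_orthogonal_inf_of_hasOrthogonalProjection hSW
  have hgp : gradedPiece F W = Sᗮ ⊓ W := by
    rw [gradedPiece, inf_comm]
  rw [hgp]
  convert this using 2

lemma le_iSup_gradedPiece (F : Finset (Submodule ℝ V)) :
    ∀ W ∈ F, W ≤ ⨆ U : {U // U ∈ F}, gradedPiece F U.1 := by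
  classical
  intro W
  induction W using WellFoundedLT.induction with
  | _ W ih =>
    intro hW
    letI : DecidablePred fun U : Submodule ℝ V => U < W := fun _ => Classical.propDecidable _
    have key := gradedPiece_sup_eq F W
    rw [← key]
    refine sup_le ?_ ?_
    · refine Finset.sup_le fun U hU => ?_
      simp only [Finset.mem_filter] at hU
      exact ih U hU.2 hU.1
    · exact le_iSup (fun U : {U // U ∈ F} => gradedPiece F U.1) ⟨W, hW⟩

lemma iSup_gradedPiece_eq_top (F : Finset (Submodule ℝ V)) (hF : IsMultiFlag F) :
    ⨆ U : {U // U ∈ F}, gradedPiece F U.1 = ⊤ :=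
  top_unique (le_iSup_gradedPiece F ⊤ hF.2.1)

theorem stmt0 (F : Finset (Submodule ℝ V)) (hF : IsMultiFlag F) :
    Module.finrank ℝ V ≤ ∑ W ∈ F, Module.finrank ℝ (gradedPiece F W) ∧
      (∑ W ∈ F, Module.finrank ℝ (gradedPiece F W) = Module.finrank ℝ V ↔
        InGeneralPosition F) := by
  letI := Classical.decEq {W // W ∈ F}
  set A : {W // W ∈ F} → Submodule ℝ V := fun W => gradedPiece F W.1 with hA
  set f := DirectSum.coeLinearMap A with hf
  have hrange : LinearMap.range f = ⊤ := by
    rw [hf, DirectSum.range_coeLinearMap, iSup_gradedPiece_eq_top F hF]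
  have hsurj : Function.Surjective f := LinearMap.range_eq_top.mp hrange
  have hdom : finrank ℝ (DirectSum {W // W ∈ F} fun W => A W) =
      ∑ W ∈ F, finrank ℝ (gradedPiece F W) := by
    rw [finrank_directSum]
    exact Finset.sum_coe_sort F fun W => finrank ℝ (gradedPiece F W)
  haveI : Module.Finite ℝ (DirectSum {W // W ∈ F} fun W => A W) :=
    Module.Finite.equiv (DirectSum.linearEquivFunOnFintype ℝ _ (fun W => A W)).symm
  have hrn := LinearMap.finrank_range_add_finrank_ker f
  rw [hrange, finrank_top] at hrn
  have hle : finrank ℝ V ≤ ∑ W ∈ F, finrank ℝ (gradedPiece F W) := by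
    rw [← hdom, ← hrn]; exact Nat.le_add_right _ _
  refine ⟨hle, ?_, ?_⟩
  · intro heq
    have hker : finrank ℝ (LinearMap.ker f) = 0 := by omega
    have hker' : LinearMap.ker f = ⊥ :=
      Submodule.finrank_eq_zero.mp hker
    have hinj : Function.Injective f := LinearMap.ker_eq_bot.mp hker'
    exact ⟨hinj, hsurj⟩
  · intro hgp
    have hbij : Function.Bijective f := hgp
    have : finrank ℝ (DirectSum {W // W ∈ F} fun W => A W) = finrank ℝ V :=
      (LinearEquiv.ofBijective f hbij).finrank_eq
    rw [← hdom, this]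
end

section
/- Let V be a finite-dimensional real inner product space and let 𝓖₁ and 𝓖₂ be two semi-flags of V, i.e., finite sets of subspaces of V, each totally ordered by inclusion and each containing {0} and V. Then the set 𝓕 = {A ∩ B | A ∈ 𝓖₁, B ∈ 𝓖₂} (which is the smallest multi-flag of V containing 𝓖₁ and 𝓖₂) is in general position. -/
/-!
STATEMENT 1: The multi-flag generated by two semi-flags of a finite-dimensional
real inner product space is in general position.
-/

variable {V : Type*} [NormedAddCommGroup V] [InnerProductSpace ℝ V] [FiniteDimensional ℝ V]

/-- A semi-flag of `V`: a finite set of subspaces totally ordered by inclusion,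
containing `⊥` and `⊤`. -/
def IsSemiFlag (G : Finset (Submodule ℝ V)) : Prop :=
  ⊥ ∈ G ∧ ⊤ ∈ G ∧ ∀ A ∈ G, ∀ B ∈ G, A ≤ B ∨ B ≤ A

/-- The multi-flag generated by two semi-flags: all pairwise intersections
`A ⊓ B` with `A ∈ G₁`, `B ∈ G₂`. -/
noncomputable def pairwiseInfs (G₁ G₂ : Finset (Submodule ℝ V)) : Finset (Submodule ℝ V) :=
  letI := Classical.decEq (Submodule ℝ V)
  (G₁ ×ˢ G₂).image fun p => p.1 ⊓ p.2

/-! ### Auxiliary definitions -/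

set_option linter.unusedSectionVars false

open Module Submodule

section Aux

attribute [local instance] Classical.propDecidable

/-- The supremum of the elements of `F` strictly below `W`. -/
noncomputable def subSup (F : Finset (Submodule ℝ V)) (W : Submodule ℝ V) : Submodule ℝ V :=
  letI := Classical.decEq (Submodule ℝ V)
  letI : DecidablePred fun U : Submodule ℝ V => U < W := fun _ => Classical.propDecidable _
  (F.filter fun U => U < W).sup id

/-- The infimum of the elements of `F` strictly above `W` (the "successor" in a chain). -/
noncomputable def chSucc (F : Finset (Submodule ℝ V)) (W : Submodule ℝ V) : Submodule ℝ V :=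
  letI := Classical.decEq (Submodule ℝ V)
  letI : DecidablePred fun U : Submodule ℝ V => W < U := fun _ => Classical.propDecidable _
  (F.filter fun U => W < U).inf id

/-- The infimum of the elements of `F` containing `W`. -/
noncomputable def minUp (F : Finset (Submodule ℝ V)) (W : Submodule ℝ V) : Submodule ℝ V :=
  letI := Classical.decEq (Submodule ℝ V)
  letI : DecidablePred fun U : Submodule ℝ V => W ≤ U := fun _ => Classical.propDecidable _
  (F.filter fun U => W ≤ U).inf id

/-- Integer-valued rank. -/
noncomputable def rk (W : Submodule ℝ V) : ℤ := (Module.finrank ℝ W : ℤ)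

theorem gradedPiece_eq (F : Finset (Submodule ℝ V)) (W : Submodule ℝ V) :
    gradedPiece F W = W ⊓ (subSup F W)ᗮ := rfl

theorem subSup_le (F : Finset (Submodule ℝ V)) {W : Submodule ℝ V} : subSup F W ≤ W := by
  unfold subSup
  refine Finset.sup_le fun U hU => ?_
  simp only [Finset.mem_filter] at hU
  exact le_of_lt hU.2

theorem le_subSup {F : Finset (Submodule ℝ V)} {U W : Submodule ℝ V} (hU : U ∈ F) (h : U < W) :
    U ≤ subSup F W := by
  unfold subSup
  exact Finset.le_sup (f := id) (by simp [hU, h])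

theorem rk_bot : rk (⊥ : Submodule ℝ V) = 0 := by simp [rk]

theorem rk_nonneg (W : Submodule ℝ V) : 0 ≤ rk W := Int.ofNat_nonneg _

theorem rk_mono {A B : Submodule ℝ V} (h : A ≤ B) : rk A ≤ rk B := by
  unfold rk
  exact_mod_cast Submodule.finrank_mono h

theorem rk_sup_add_rk_inf (A B : Submodule ℝ V) :
    rk (A ⊔ B) + rk (A ⊓ B) = rk A + rk B := by
  unfold rk
  exact_mod_cast Submodule.finrank_sup_add_finrank_inf_eq A B

theorem rk_inf_orthogonal {K W : Submodule ℝ V} (h : K ≤ W) :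
    rk (W ⊓ Kᗮ) = rk W - rk K := by
  have h1 : K ⊔ Kᗮ ⊓ W = W := Submodule.sup_orthogonal_inf_of_hasOrthogonalProjection h
  have h2 : K ⊓ (Kᗮ ⊓ W) = ⊥ := by
    rw [← inf_assoc, Submodule.inf_orthogonal_eq_bot, bot_inf_eq]
  have h3 := rk_sup_add_rk_inf K (Kᗮ ⊓ W)
  rw [h1, h2, rk_bot] at h3
  rw [inf_comm]
  linarith

theorem rk_gradedPiece (F : Finset (Submodule ℝ V)) (W : Submodule ℝ V) :
    rk (gradedPiece F W) = rk W - rk (subSup F W) := by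
  rw [gradedPiece_eq]
  exact rk_inf_orthogonal (subSup_le F)

/-! ### Surjectivity: every element of `F` lies in the sup of the pieces. -/

theorem le_iSup_pieces (F : Finset (Submodule ℝ V)) :
    ∀ W : Submodule ℝ V, W ∈ F → W ≤ ⨆ U : {U // U ∈ F}, gradedPiece F U.1 := by
  intro W
  induction W using WellFoundedLT.induction with
  | ind W IH =>
    intro hW
    have hK : subSup F W ≤ ⨆ U : {U // U ∈ F}, gradedPiece F U.1 := by
      unfold subSup
      refine Finset.sup_le fun U hU => ?_
      simp only [Finset.mem_filter] at hU
      exact IH U hU.2 hU.1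
    have hdec : subSup F W ⊔ (subSup F W)ᗮ ⊓ W = W :=
      Submodule.sup_orthogonal_inf_of_hasOrthogonalProjection (subSup_le F)
    calc W = subSup F W ⊔ (subSup F W)ᗮ ⊓ W := hdec.symm
      _ ≤ _ := by
          refine sup_le hK ?_
          rw [inf_comm, ← gradedPiece_eq]
          exact le_iSup (fun U : {U // U ∈ F} => gradedPiece F U.1) ⟨W, hW⟩

/-! ### Chain lemmas -/

theorem sup_mem_of_chain {G t : Finset (Submodule ℝ V)} (hG : IsSemiFlag G)
    (ht : ∀ X ∈ t, X ∈ G) (hne : t.Nonempty) {P : Submodule ℝ V → Prop}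
    (hP : ∀ X ∈ t, P X) :
    t.sup id ∈ G ∧ P (t.sup id) := by
  rw [← Finset.sup'_eq_sup hne id]
  exact Finset.sup'_mem {X : Submodule ℝ V | X ∈ G ∧ P X}
    (fun x hx y hy => by
      rcases hG.2.2 x hx.1 y hy.1 with h | h
      · rw [sup_eq_right.2 h]; exact hy
      · rw [sup_eq_left.2 h]; exact hx)
    t hne id (fun X hX => ⟨ht X hX, hP X hX⟩)

theorem inf_mem_of_chain {G t : Finset (Submodule ℝ V)} (hG : IsSemiFlag G)
    (ht : ∀ X ∈ t, X ∈ G) (hne : t.Nonempty) {P : Submodule ℝ V → Prop}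
    (hP : ∀ X ∈ t, P X) :
    t.inf id ∈ G ∧ P (t.inf id) := by
  rw [← Finset.inf'_eq_inf hne id]
  exact Finset.inf'_mem {X : Submodule ℝ V | X ∈ G ∧ P X}
    (fun x hx y hy => by
      rcases hG.2.2 x hx.1 y hy.1 with h | h
      · rw [inf_eq_left.2 h]; exact hx
      · rw [inf_eq_right.2 h]; exact hy)
    t hne id (fun X hX => ⟨ht X hX, hP X hX⟩)

theorem chain_subSup_mem {G : Finset (Submodule ℝ V)} (hG : IsSemiFlag G)
    {A : Submodule ℝ V} (hA0 : A ≠ ⊥) : subSup G A ∈ G ∧ subSup G A < A := by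
  unfold subSup
  refine sup_mem_of_chain (P := fun X => X < A) hG
    (fun X hX => (Finset.mem_filter.1 hX).1) ?_
    (fun X hX => (Finset.mem_filter.1 hX).2)
  exact ⟨⊥, Finset.mem_filter.2 ⟨hG.1, bot_lt_iff_ne_bot.2 hA0⟩⟩

theorem chain_chSucc_mem {G : Finset (Submodule ℝ V)} (hG : IsSemiFlag G)
    {A : Submodule ℝ V} (hAT : A ≠ ⊤) : chSucc G A ∈ G ∧ A < chSucc G A := by
  unfold chSucc
  refine inf_mem_of_chain (P := fun X => A < X) hG
    (fun X hX => (Finset.mem_filter.1 hX).1) ?_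
    (fun X hX => (Finset.mem_filter.1 hX).2)
  exact ⟨⊤, Finset.mem_filter.2 ⟨hG.2.1, lt_top_iff_ne_top.2 hAT⟩⟩

theorem minUp_mem {G : Finset (Submodule ℝ V)} (hG : IsSemiFlag G) (W : Submodule ℝ V) :
    minUp G W ∈ G ∧ W ≤ minUp G W := by
  unfold minUp
  refine inf_mem_of_chain (P := fun X => W ≤ X) hG
    (fun X hX => (Finset.mem_filter.1 hX).1) ?_
    (fun X hX => (Finset.mem_filter.1 hX).2)
  exact ⟨⊤, Finset.mem_filter.2 ⟨hG.2.1, le_top⟩⟩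

theorem minUp_le {G : Finset (Submodule ℝ V)} {W A : Submodule ℝ V}
    (hA : A ∈ G) (h : W ≤ A) : minUp G W ≤ A := by
  unfold minUp
  exact Finset.inf_le (f := id) (by simp [hA, h])

theorem chSucc_le {G : Finset (Submodule ℝ V)} {A X : Submodule ℝ V}
    (hX : X ∈ G) (h : A < X) : chSucc G A ≤ X := by
  unfold chSucc
  exact Finset.inf_le (f := id) (by simp [hX, h])

theorem subSup_chSucc {G : Finset (Submodule ℝ V)} (hG : IsSemiFlag G)
    {C : Submodule ℝ V} (hC : C ∈ G) (hCT : C ≠ ⊤) : subSup G (chSucc G C) = C := by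
  obtain ⟨hm, hlt⟩ := chain_chSucc_mem hG hCT
  refine le_antisymm ?_ (le_subSup hC hlt)
  unfold subSup
  refine Finset.sup_le fun X hX => ?_
  simp only [Finset.mem_filter] at hX
  obtain ⟨hXG, hXlt⟩ := hX
  rcases hG.2.2 X hXG C hC with h | h
  · exact h
  · rcases eq_or_lt_of_le h with h' | h'
    · exact le_of_eq h'.symm
    · exact absurd (chSucc_le hXG h') hXlt.not_ge

theorem chSucc_subSup {G : Finset (Submodule ℝ V)} (hG : IsSemiFlag G)
    {A : Submodule ℝ V} (hA : A ∈ G) (hA0 : A ≠ ⊥) : chSucc G (subSup G A) = A := by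
  obtain ⟨hm, hlt⟩ := chain_subSup_mem hG hA0
  refine le_antisymm (chSucc_le hA hlt) ?_
  unfold chSucc
  refine Finset.le_inf fun X hX => ?_
  simp only [Finset.mem_filter] at hX
  obtain ⟨hXG, hXlt⟩ := hX
  rcases hG.2.2 A hA X hXG with h | h
  · exact h
  · rcases eq_or_lt_of_le h with h' | h'
    · exact le_of_eq h'.symm
    · exact absurd (le_subSup hXG h') hXlt.not_ge

/-! ### Telescoping sum over a chain -/

theorem telescope {G : Finset (Submodule ℝ V)} (hG : IsSemiFlag G) (g : Submodule ℝ V → ℤ) :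
    ∑ A ∈ G.erase ⊥, (g A - g (subSup G A)) = g ⊤ - g ⊥ := by
  classical
  rw [Finset.sum_sub_distrib]
  have h2 : ∑ A ∈ G.erase ⊥, g (subSup G A) = ∑ A ∈ G.erase ⊤, g A := by
    refine Finset.sum_nbij' (subSup G) (chSucc G) ?_ ?_ ?_ ?_ ?_
    · intro A hA
      obtain ⟨hA0, hAG⟩ := Finset.mem_erase.1 hA
      obtain ⟨hm, hlt⟩ := chain_subSup_mem hG hA0
      exact Finset.mem_erase.2 ⟨ne_top_of_lt (lt_of_lt_of_le hlt le_top), hm⟩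
    · intro C hC
      obtain ⟨hCT, hCG⟩ := Finset.mem_erase.1 hC
      obtain ⟨hm, hlt⟩ := chain_chSucc_mem hG hCT
      exact Finset.mem_erase.2 ⟨ne_bot_of_gt (lt_of_le_of_lt bot_le hlt), hm⟩
    · intro A hA
      obtain ⟨hA0, hAG⟩ := Finset.mem_erase.1 hA
      exact chSucc_subSup hG hAG hA0
    · intro C hC
      obtain ⟨hCT, hCG⟩ := Finset.mem_erase.1 hC
      exact subSup_chSucc hG hCG hCT
    · intro A _
      rfl
  rw [h2]
  by_cases hbt : (⊥ : Submodule ℝ V) = ⊤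
  · rw [hbt]; simp
  · have e1 : ∑ A ∈ G.erase ⊥, g A + g ⊥ = ∑ A ∈ G, g A := Finset.sum_erase_add _ _ hG.1
    have e2 : ∑ A ∈ G.erase ⊤, g A + g ⊤ = ∑ A ∈ G, g A := Finset.sum_erase_add _ _ hG.2.1
    linarith

/-! ### The double difference and its properties -/

/-- The "second difference" `e(A,B)`. -/
noncomputable def eAB (G₁ G₂ : Finset (Submodule ℝ V)) (A B : Submodule ℝ V) : ℤ :=
  rk (A ⊓ B) - rk (subSup G₁ A ⊓ B) - rk (A ⊓ subSup G₂ B) + rk (subSup G₁ A ⊓ subSup G₂ B)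

theorem eAB_eq {G₁ G₂ : Finset (Submodule ℝ V)} {A B : Submodule ℝ V}
    (hA : subSup G₁ A ≤ A) (hB : subSup G₂ B ≤ B) :
    eAB G₁ G₂ A B = rk (A ⊓ B) - rk ((subSup G₁ A ⊓ B) ⊔ (A ⊓ subSup G₂ B)) := by
  have key : (subSup G₁ A ⊓ B) ⊓ (A ⊓ subSup G₂ B) = subSup G₁ A ⊓ subSup G₂ B := by
    rw [inf_inf_inf_comm, inf_eq_left.2 hA, inf_eq_right.2 hB]
  have h3 := rk_sup_add_rk_inf (subSup G₁ A ⊓ B) (A ⊓ subSup G₂ B)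
  rw [key] at h3
  unfold eAB
  linarith

theorem eAB_nonneg {G₁ G₂ : Finset (Submodule ℝ V)} {A B : Submodule ℝ V}
    (hA : subSup G₁ A ≤ A) (hB : subSup G₂ B ≤ B) : 0 ≤ eAB G₁ G₂ A B := by
  rw [eAB_eq hA hB]
  have h : (subSup G₁ A ⊓ B) ⊔ (A ⊓ subSup G₂ B) ≤ A ⊓ B :=
    sup_le (inf_le_inf_right B hA) (inf_le_inf_left A hB)
  linarith [rk_mono h]

theorem sum_e {G₁ G₂ : Finset (Submodule ℝ V)} (h₁ : IsSemiFlag G₁) (h₂ : IsSemiFlag G₂) :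
    ∑ A ∈ G₁.erase ⊥, ∑ B ∈ G₂.erase ⊥, eAB G₁ G₂ A B = rk (⊤ : Submodule ℝ V) := by
  have inner : ∀ A ∈ G₁.erase ⊥,
      (∑ B ∈ G₂.erase ⊥, eAB G₁ G₂ A B) = rk A - rk (subSup G₁ A) := by
    intro A _
    have ht := telescope h₂ (fun B => rk (A ⊓ B) - rk (subSup G₁ A ⊓ B))
    simp only [inf_top_eq, inf_bot_eq, rk_bot, sub_self, sub_zero] at ht
    rw [← ht]
    exact Finset.sum_congr rfl fun B _ => by unfold eAB; ring
  rw [Finset.sum_congr rfl inner]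
  have ht := telescope h₁ rk
  rw [rk_bot, sub_zero] at ht
  exact ht

/-! ### The multi-flag generated by two semi-flags -/

theorem mem_pairwiseInfs {G₁ G₂ : Finset (Submodule ℝ V)} {W : Submodule ℝ V} :
    W ∈ pairwiseInfs G₁ G₂ ↔ ∃ A ∈ G₁, ∃ B ∈ G₂, A ⊓ B = W := by
  unfold pairwiseInfs
  simp [Finset.mem_image, Finset.mem_product]
  constructor
  · rintro ⟨A, B, ⟨hA, hB⟩, h⟩
    exact ⟨A, hA, B, hB, h⟩
  · rintro ⟨A, hA, B, hB, h⟩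
    exact ⟨A, B, ⟨hA, hB⟩, h⟩

theorem eq_inf_minUp {G₁ G₂ : Finset (Submodule ℝ V)} (h₁ : IsSemiFlag G₁) (h₂ : IsSemiFlag G₂)
    {W : Submodule ℝ V} (hW : W ∈ pairwiseInfs G₁ G₂) :
    W = minUp G₁ W ⊓ minUp G₂ W := by
  obtain ⟨A', hA', B', hB', hab⟩ := mem_pairwiseInfs.1 hW
  refine le_antisymm (le_inf (minUp_mem h₁ W).2 (minUp_mem h₂ W).2) ?_
  have hWA' : W ≤ A' := hab ▸ inf_le_left
  have hWB' : W ≤ B' := hab ▸ inf_le_right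
  calc minUp G₁ W ⊓ minUp G₂ W ≤ A' ⊓ B' :=
        inf_le_inf (minUp_le hA' hWA') (minUp_le hB' hWB')
    _ = W := hab

theorem piece_bound {G₁ G₂ : Finset (Submodule ℝ V)} (h₁ : IsSemiFlag G₁) (h₂ : IsSemiFlag G₂)
    {W : Submodule ℝ V} (hW : W ∈ pairwiseInfs G₁ G₂) (hW0 : W ≠ ⊥) :
    rk (gradedPiece (pairwiseInfs G₁ G₂) W) ≤ eAB G₁ G₂ (minUp G₁ W) (minUp G₂ W) := by
  obtain ⟨hA1, hWA⟩ := minUp_mem h₁ W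
  obtain ⟨hB1, hWB⟩ := minUp_mem h₂ W
  set A := minUp G₁ W with hAdef
  set B := minUp G₂ W with hBdef
  have hWAB : W = A ⊓ B := eq_inf_minUp h₁ h₂ hW
  have hA0 : A ≠ ⊥ := fun h => hW0 (le_bot_iff.1 (h ▸ hWA))
  have hB0 : B ≠ ⊥ := fun h => hW0 (le_bot_iff.1 (h ▸ hWB))
  obtain ⟨hpA1, hpAlt⟩ := chain_subSup_mem h₁ hA0
  obtain ⟨hpB1, hpBlt⟩ := chain_subSup_mem h₂ hB0
  have hc1 : subSup G₁ A ⊓ B ≤ subSup (pairwiseInfs G₁ G₂) W := by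
    refine le_subSup (mem_pairwiseInfs.2 ⟨subSup G₁ A, hpA1, B, hB1, rfl⟩) ?_
    refine lt_of_le_of_ne (hWAB ▸ inf_le_inf_right B hpAlt.le) fun h => ?_
    have : W ≤ subSup G₁ A := h ▸ inf_le_left
    exact absurd (minUp_le hpA1 this) hpAlt.not_ge
  have hc2 : A ⊓ subSup G₂ B ≤ subSup (pairwiseInfs G₁ G₂) W := by
    refine le_subSup (mem_pairwiseInfs.2 ⟨A, hA1, subSup G₂ B, hpB1, rfl⟩) ?_
    refine lt_of_le_of_ne (hWAB ▸ inf_le_inf_left A hpBlt.le) fun h => ?_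
    have : W ≤ subSup G₂ B := h ▸ inf_le_right
    exact absurd (minUp_le hpB1 this) hpBlt.not_ge
  have hM : (subSup G₁ A ⊓ B) ⊔ (A ⊓ subSup G₂ B) ≤ subSup (pairwiseInfs G₁ G₂) W :=
    sup_le hc1 hc2
  rw [rk_gradedPiece, eAB_eq hpAlt.le hpBlt.le, ← hWAB]
  linarith [rk_mono hM]

theorem key_ineq {G₁ G₂ : Finset (Submodule ℝ V)} (h₁ : IsSemiFlag G₁) (h₂ : IsSemiFlag G₂) :
    ∑ W ∈ pairwiseInfs G₁ G₂, rk (gradedPiece (pairwiseInfs G₁ G₂) W)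
      ≤ rk (⊤ : Submodule ℝ V) := by
  classical
  have hbot : (⊥ : Submodule ℝ V) ∈ pairwiseInfs G₁ G₂ :=
    mem_pairwiseInfs.2 ⟨⊥, h₁.1, ⊥, h₂.1, inf_idem ⊥⟩
  have hzero : rk (gradedPiece (pairwiseInfs G₁ G₂) ⊥) = 0 := by
    have h : gradedPiece (pairwiseInfs G₁ G₂) ⊥ = ⊥ :=
      le_bot_iff.1 (by rw [gradedPiece_eq]; exact inf_le_left)
    rw [h, rk_bot]
  rw [← Finset.sum_erase_add _ _ hbot, hzero, add_zero]
  have step2 : ∑ W ∈ (pairwiseInfs G₁ G₂).erase ⊥, rk (gradedPiece (pairwiseInfs G₁ G₂) W)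
      ≤ ∑ W ∈ (pairwiseInfs G₁ G₂).erase ⊥, eAB G₁ G₂ (minUp G₁ W) (minUp G₂ W) :=
    Finset.sum_le_sum fun W hW =>
      piece_bound h₁ h₂ (Finset.mem_erase.1 hW).2 (Finset.mem_erase.1 hW).1
  refine le_trans step2 ?_
  have himg : ∑ W ∈ (pairwiseInfs G₁ G₂).erase ⊥, eAB G₁ G₂ (minUp G₁ W) (minUp G₂ W)
      = ∑ p ∈ ((pairwiseInfs G₁ G₂).erase ⊥).image
          (fun W => (minUp G₁ W, minUp G₂ W)), eAB G₁ G₂ p.1 p.2 := by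
    rw [Finset.sum_image]
    intro x hx y hy hxy
    rw [Prod.mk.injEq] at hxy
    rw [eq_inf_minUp h₁ h₂ (Finset.mem_erase.1 hx).2,
      eq_inf_minUp h₁ h₂ (Finset.mem_erase.1 hy).2, hxy.1, hxy.2]
  rw [himg]
  have hsubset : ((pairwiseInfs G₁ G₂).erase ⊥).image (fun W => (minUp G₁ W, minUp G₂ W))
      ⊆ (G₁.erase ⊥) ×ˢ (G₂.erase ⊥) := by
    intro p hp
    obtain ⟨W, hW, rfl⟩ := Finset.mem_image.1 hp
    obtain ⟨hW0, hWF⟩ := Finset.mem_erase.1 hW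
    obtain ⟨hA1, hWA⟩ := minUp_mem h₁ W
    obtain ⟨hB1, hWB⟩ := minUp_mem h₂ W
    refine Finset.mem_product.2 ⟨Finset.mem_erase.2 ⟨?_, hA1⟩, Finset.mem_erase.2 ⟨?_, hB1⟩⟩
    · exact fun h => hW0 (le_bot_iff.1 (h ▸ hWA))
    · exact fun h => hW0 (le_bot_iff.1 (h ▸ hWB))
  have hstep3 := Finset.sum_le_sum_of_subset_of_nonneg hsubset
    (fun p hp _ => by
      obtain ⟨hpa, hpb⟩ := Finset.mem_product.1 hp
      exact eAB_nonneg (chain_subSup_mem h₁ (Finset.mem_erase.1 hpa).1).2.le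
        (chain_subSup_mem h₂ (Finset.mem_erase.1 hpb).1).2.le)
  refine le_trans hstep3 ?_
  rw [Finset.sum_product, sum_e h₁ h₂]

end Aux

/-- `IsInternal` from bijectivity of the coe linear map. -/
theorem isInternal_of_coeLinearMap {ι : Type*} [DecidableEq ι] (A : ι → Submodule ℝ V)
    (h : Function.Bijective (DirectSum.coeLinearMap A)) :
    DirectSum.IsInternal A := h

/-! ### Main theorem -/

theorem stmt1 (G₁ G₂ : Finset (Submodule ℝ V)) (h₁ : IsSemiFlag G₁) (h₂ : IsSemiFlag G₂) :
    InGeneralPosition (pairwiseInfs G₁ G₂) := by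
  unfold InGeneralPosition
  set F := pairwiseInfs G₁ G₂ with hFdef
  letI : DecidableEq {W // W ∈ F} := Classical.decEq _
  show DirectSum.IsInternal fun W : {W // W ∈ F} => gradedPiece F W.1
  set A : {W // W ∈ F} → Submodule ℝ V := fun W => gradedPiece F W.1 with hAdef
  haveI : Module.Finite ℝ (DirectSum {W // W ∈ F} fun W => A W) :=
    Module.Finite.equiv (DirectSum.linearEquivFunOnFintype ℝ _ (fun W => A W)).symm
  have htop : (⊤ : Submodule ℝ V) ∈ F :=
    mem_pairwiseInfs.2 ⟨⊤, h₁.2.1, ⊤, h₂.2.1, inf_idem ⊤⟩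
  have hsup : ⨆ W : {W // W ∈ F}, A W = ⊤ :=
    top_le_iff.1 (le_iSup_pieces F ⊤ htop)
  have hsurj : Function.Surjective (DirectSum.coeLinearMap A) := by
    rw [← LinearMap.range_eq_top, DirectSum.range_coeLinearMap, hsup]
  have hge : finrank ℝ V ≤ finrank ℝ (DirectSum {W // W ∈ F} fun W => A W) := by
    have h := LinearMap.finrank_range_le (DirectSum.coeLinearMap A)
    rwa [LinearMap.range_eq_top.2 hsurj, finrank_top] at h
  have hle : finrank ℝ (DirectSum {W // W ∈ F} fun W => A W) ≤ finrank ℝ V := by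
    rw [finrank_directSum]
    have hcast : ((∑ W : {W // W ∈ F}, finrank ℝ (A W) : ℕ) : ℤ)
        ≤ ((finrank ℝ V : ℕ) : ℤ) := by
      push_cast
      calc ∑ W : {W // W ∈ F}, (finrank ℝ (A W) : ℤ)
          = ∑ W ∈ F.attach, rk (gradedPiece F W.1) := rfl
        _ = ∑ W ∈ F, rk (gradedPiece F W) :=
            Finset.sum_attach F (fun W => rk (gradedPiece F W))
        _ ≤ rk (⊤ : Submodule ℝ V) := key_ineq h₁ h₂
        _ = (finrank ℝ V : ℤ) := by rw [rk]; norm_cast; exact finrank_top ℝ V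
    exact_mod_cast hcast
  have hdim : finrank ℝ (DirectSum {W // W ∈ F} fun W => A W) = finrank ℝ V :=
    le_antisymm hle hge
  exact isInternal_of_coeLinearMap A
    ⟨(LinearMap.injective_iff_surjective_of_finrank_eq_finrank hdim).2 hsurj, hsurj⟩
end

section
/- Let k be a field, C a nonempty finite connected partially ordered set, and M a C-module over k such that every structure map φ_{xy} (x ≤ y) is an isomorphism and M is holonomy-free. Fix x₀ ∈ C and let d = dim M(x₀). Then there exist submodules L₁, …, L_d of M such that for every x ∈ C each Lᵢ(x) is one-dimensional, every φ_{xy} maps Lᵢ(x) isomorphically onto Lᵢ(y), and M(x) is the internal direct sum ⊕ᵢ Lᵢ(x). -/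
/-!
Holonomy-freeness says that transporting a vector along a zig-zag (forwards by `φ`, backwards by
`φ⁻¹`) depends only on its endpoints. Hence every vector of `M x` extends uniquely to a flat
section, i.e. a family `s` with `φ x y h (s x) = s y`, and evaluation at any `x` is an isomorphism
from the space of flat sections onto `M x`. A basis of `M x₀` pulled back to flat sections
`σ₁, …, σ_d` then gives the lines `Lᵢ x = k ∙ σᵢ x`.
-/

section

variable {k : Type*} [Field k] {C : Type*} [PartialOrder C]
  (M : C → Type*) [∀ x, AddCommGroup (M x)] [∀ x, Module k (M x)]
  (φ : ∀ x y : C, x ≤ y → (M x →ₗ[k] M y))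

/-- `M` (with all structure maps isomorphisms) is holonomy-free: along any zig-zag
loop, any chain of vectors compatible with the structure maps returns to its
starting value; i.e., the composite of the maps `λᵢ = φ^{±1}` once around any
zig-zag loop is the identity. -/
def HolonomyFree : Prop :=
  ∀ (n : ℕ) (v : Fin (n + 1) → C) (hloop : v (Fin.last n) = v 0),
    (∀ i : Fin n, v i.castSucc ≤ v i.succ ∨ v i.succ ≤ v i.castSucc) →
    ∀ w : ∀ i, M (v i),
      (∀ i : Fin n,
        (∃ h : v i.castSucc ≤ v i.succ, φ _ _ h (w i.castSucc) = w i.succ) ∨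
        (∃ h : v i.succ ≤ v i.castSucc, φ _ _ h (w i.succ) = w i.castSucc)) →
      w (Fin.last n) = cast (congrArg M hloop).symm (w 0)

end

open Relation

theorem reflTransGen_iff_exists_fin_path {α : Type*} {r : α → α → Prop} {a b : α} :
    ReflTransGen r a b ↔ ∃ (n : ℕ) (v : Fin (n + 1) → α), v 0 = a ∧ v (Fin.last n) = b ∧
      ∀ i : Fin n, r (v i.castSucc) (v i.succ) := by
  constructor
  · intro h
    induction h with
    | refl => exact ⟨0, fun _ => a, rfl, rfl, Fin.elim0⟩
    | @tail c d _ hcd ih =>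
      obtain ⟨n, v, hv0, hvn, hv⟩ := ih
      refine ⟨n + 1, Fin.snoc v d, ?_, Fin.snoc_last _ _, Fin.lastCases ?_ fun i => ?_⟩
      · exact (Fin.snoc_castSucc (i := 0) ..).trans hv0
      · simpa only [Fin.snoc_castSucc, Fin.succ_last, Fin.snoc_last, hvn] using hcd
      · simpa only [Fin.succ_castSucc, Fin.snoc_castSucc] using hv i
  · rintro ⟨n, v, rfl, rfl, hv⟩
    suffices ∀ i, ReflTransGen r (v 0) (v i) from this _
    intro i
    induction i using Fin.induction with
    | zero => exact .refl
    | succ i ih => exact ih.tail (hv i)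

section Transport

variable {k C : Type*} [Semiring k] [PartialOrder C] {M : C → Type*}
  [∀ x, AddCommMonoid (M x)] [∀ x, Module k (M x)] (φ : ∀ x y : C, x ≤ y → (M x →ₗ[k] M y))

abbrev Transport : (Σ x, M x) → (Σ x, M x) → Prop :=
  ReflTransGen (SymmGen fun p q => ∃ h : p.1 ≤ q.1, φ p.1 q.1 h p.2 = q.2)

def flatSections : Submodule k (∀ x, M x) where
  carrier := {s | ∀ x y (h : x ≤ y), φ x y h (s x) = s y}
  add_mem' hs ht x y h := by simp [hs x y h, ht x y h]
  zero_mem' x y h := map_zero _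
  smul_mem' c s hs x y h := by simp [hs x y h]

variable {φ}

theorem Transport.symm {p q : Σ x, M x} (h : Transport φ p q) : Transport φ q p :=
  _root_.symm h

theorem Transport.trans {p q r : Σ x, M x} (h : Transport φ p q) (h' : Transport φ q r) :
    Transport φ p r :=
  ReflTransGen.trans h h'

theorem exists_transport (hφ : ∀ x y h, Function.Surjective (φ x y h)) {x y : C}
    (hxy : ReflTransGen (SymmGen (· ≤ ·)) x y) (a : M x) : ∃ b, Transport φ ⟨x, a⟩ ⟨y, b⟩ := by
  induction hxy with
  | refl => exact ⟨a, .refl⟩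
  | @tail u z _ huz ih =>
    obtain ⟨b, hb⟩ := ih
    rcases huz with h | h
    · exact ⟨φ u z h b, hb.tail (.of_rel ⟨h, rfl⟩)⟩
    · obtain ⟨c, hc⟩ := hφ z u h b
      exact ⟨c, hb.tail (.of_rel_symm ⟨h, hc⟩)⟩

theorem transport_of_mem_flatSections {s : ∀ x, M x} (hs : s ∈ flatSections φ) {x y : C}
    (hxy : ReflTransGen (SymmGen (· ≤ ·)) x y) : Transport φ ⟨x, s x⟩ ⟨y, s y⟩ := by
  induction hxy with
  | refl => exact .refl
  | @tail u z _ huz ih =>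
    rcases huz with h | h
    · exact ih.tail (.of_rel ⟨h, hs u z h⟩)
    · exact ih.tail (.of_rel_symm ⟨h, hs z u h⟩)

end Transport

section HolonomyFree

variable {k C : Type*} [Field k] [PartialOrder C] {M : C → Type*}
  [∀ x, AddCommGroup (M x)] [∀ x, Module k (M x)] {φ : ∀ x y : C, x ≤ y → (M x →ₗ[k] M y)}

theorem HolonomyFree.eq_of_transport (hfree : HolonomyFree M φ) {x : C} {a b : M x}
    (h : Transport φ ⟨x, a⟩ ⟨x, b⟩) : a = b := by
  obtain ⟨n, v, hv0, hvn, hv⟩ := reflTransGen_iff_exists_fin_path.mp h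
  have hloop : (v (Fin.last n)).1 = (v 0).1 := by rw [hv0, hvn]
  have hround := hfree n (fun i => (v i).1) hloop (fun i => (hv i).imp (·.1) (·.1))
    (fun i => (v i).2) hv
  have ha : (v 0).2 ≍ a := (Sigma.ext_iff.mp hv0).2
  have hb : (v (Fin.last n)).2 ≍ b := (Sigma.ext_iff.mp hvn).2
  exact eq_of_heq <| ha.symm.trans <| ((heq_of_eq hround).trans (cast_heq _ _)).symm.trans hb

theorem HolonomyFree.eq_of_mem_flatSections (hfree : HolonomyFree M φ)
    (hzig : ∀ x y : C, ReflTransGen (SymmGen (· ≤ ·)) x y) {s t : ∀ x, M x}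
    (hs : s ∈ flatSections φ) (ht : t ∈ flatSections φ) {x : C} (hst : s x = t x) : s = t := by
  funext y
  have hyx : Transport φ ⟨y, s y⟩ ⟨x, t x⟩ := hst ▸ transport_of_mem_flatSections hs (hzig y x)
  exact hfree.eq_of_transport (hyx.trans (transport_of_mem_flatSections ht (hzig x y)))

theorem HolonomyFree.exists_mem_flatSections_apply_eq (hfree : HolonomyFree M φ)
    (hzig : ∀ x y : C, ReflTransGen (SymmGen (· ≤ ·)) x y)
    (hφ : ∀ x y h, Function.Surjective (φ x y h)) {x : C} (a : M x) :
    ∃ s ∈ flatSections φ, s x = a := by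
  choose s hs using fun y => exists_transport hφ (hzig x y) a
  have hs_unique (y : C) (b : M y) (h : Transport φ ⟨x, a⟩ ⟨y, b⟩) : s y = b :=
    hfree.eq_of_transport ((hs y).symm.trans h)
  exact ⟨s, fun y z h => (hs_unique z _ ((hs y).tail (.of_rel ⟨h, rfl⟩))).symm,
    hs_unique x a .refl⟩

noncomputable def HolonomyFree.flatSectionsEquiv (hfree : HolonomyFree M φ)
    (hzig : ∀ x y : C, ReflTransGen (SymmGen (· ≤ ·)) x y)
    (hφ : ∀ x y h, Function.Surjective (φ x y h)) (x : C) : flatSections φ ≃ₗ[k] M x :=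
  .ofBijective ((LinearMap.proj x).comp (flatSections φ).subtype)
    ⟨fun s t hst => Subtype.ext (hfree.eq_of_mem_flatSections hzig s.2 t.2 hst), fun a =>
      let ⟨s, hs, hsa⟩ := hfree.exists_mem_flatSections_apply_eq hzig hφ a; ⟨⟨s, hs⟩, hsa⟩⟩

end HolonomyFree

theorem Module.Basis.isInternal_span_singleton {ι R V : Type*} [Ring R] [AddCommGroup V]
    [Module R V] [DecidableEq ι] (b : Basis ι R V) : DirectSum.IsInternal fun i => R ∙ b i :=
  DirectSum.isInternal_submodule_of_iSupIndep_of_iSup_eq_top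
    b.linearIndependent.iSupIndep_span_singleton (by rw [← Submodule.span_range_eq_iSup, b.span_eq])

theorem stmt8_general (k : Type*) [Field k] (C : Type*) [PartialOrder C]
    (hconn : ∀ x y : C, ∃ (n : ℕ) (v : Fin (n + 1) → C), v 0 = x ∧ v (Fin.last n) = y ∧
      ∀ i : Fin n, v i.castSucc ≤ v i.succ ∨ v i.succ ≤ v i.castSucc)
    (M : C → Type*) [∀ x, AddCommGroup (M x)] [∀ x, Module k (M x)]
    [∀ x, FiniteDimensional k (M x)]
    (φ : ∀ x y : C, x ≤ y → (M x →ₗ[k] M y))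
    (hiso : ∀ (x y : C) (h : x ≤ y), Function.Bijective (φ x y h))
    (hfree : HolonomyFree M φ)
    (x₀ : C) :
    ∃ L : Fin (Module.finrank k (M x₀)) → ∀ x : C, Submodule k (M x),
      (∀ (i) (x y : C) (h : x ≤ y), Submodule.map (φ x y h) (L i x) = L i y) ∧
      (∀ i x, Module.finrank k (L i x) = 1) ∧
      (∀ x, DirectSum.IsInternal fun i => L i x) := by
  have hzig (x y : C) : ReflTransGen (SymmGen (· ≤ ·)) x y :=
    reflTransGen_iff_exists_fin_path.mpr (hconn x y)
  let e := hfree.flatSectionsEquiv hzig fun x y h => (hiso x y h).2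
  let σ := (Module.finBasis k (M x₀)).map (e x₀).symm
  refine ⟨fun i x => k ∙ (σ i : ∀ x, M x) x, fun i x y h => ?_, fun i x => ?_, fun x => ?_⟩
  · rw [Submodule.map_span, Set.image_singleton, (σ i).2 x y h]
  · exact finrank_span_singleton ((σ.map (e x)).ne_zero i)
  · exact (σ.map (e x)).isInternal_span_singleton

theorem stmt8 (k : Type*) [Field k] (C : Type*) [PartialOrder C] [Fintype C] [Nonempty C]
    (hconn : ∀ x y : C, ∃ (n : ℕ) (v : Fin (n + 1) → C), v 0 = x ∧ v (Fin.last n) = y ∧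
      ∀ i : Fin n, v i.castSucc ≤ v i.succ ∨ v i.succ ≤ v i.castSucc)
    (M : C → Type*) [∀ x, AddCommGroup (M x)] [∀ x, Module k (M x)]
    [∀ x, FiniteDimensional k (M x)]
    (φ : ∀ x y : C, x ≤ y → (M x →ₗ[k] M y))
    (hid : ∀ x, φ x x le_rfl = LinearMap.id)
    (hcomp : ∀ (x y z : C) (hxy : x ≤ y) (hyz : y ≤ z),
      (φ y z hyz).comp (φ x y hxy) = φ x z (hxy.trans hyz))
    (hiso : ∀ (x y : C) (h : x ≤ y), Function.Bijective (φ x y h))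
    (hfree : HolonomyFree M φ)
    (x₀ : C) :
    ∃ L : Fin (Module.finrank k (M x₀)) → ∀ x : C, Submodule k (M x),
      (∀ (i) (x y : C) (h : x ≤ y), Submodule.map (φ x y h) (L i x) = L i y) ∧
      (∀ i x, Module.finrank k (L i x) = 1) ∧
      (∀ x, DirectSum.IsInternal fun i => L i x) :=
  stmt8_general k C hconn M φ hiso hfree x₀
end
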